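/- Fix τ ∈ (0,1). For every y ∈ ℝ, pr^{(Γ(·,y), π₂*)}(Y ≤ f(y)) ≥ τ and f(y) ≤ y*_τ. -/

import Mathlib

/-!
For a measurable first-stage regime `π₁`, `w ↦ pr^{(π₁, π₂*)}(Y ≤ w)` is the mixture over
`h₁ ~ μ` of the distribution functions `w ↦ I(w, F_ε, G(·,·|h₁,π₁(h₁)))` (because
`sgn(c) c = |c|`), hence itself a distribution function, and right-continuity makes its
`τ`-quantile attained: this is the first claim. Since `Γ(h₁, z)` selects the treatment minimizing
`I(z, F_ε, G(·,·|h₁,·))`, the map `z ↦ pr^{(Γ(·,z), π₂*)}(Y ≤ z)` is a mixture of minima of two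
distribution functions, again a distribution function, and it lies below
`z ↦ pr^{(Γ(·,y), π₂*)}(Y ≤ z)`. So the set defining `y*_τ` is nonempty and contained in the one
defining `f(y)`, whence `f(y) ≤ y*_τ`.
-/

open MeasureTheory ProbabilityTheory Filter Set

noncomputable section

/-- sign function: `1` if `0 ≤ x`, `−1` otherwise. -/
def sgn (x : ℝ) : ℝ := if 0 ≤ x then 1 else -1

/-- `pr^π(Y ≤ y)`, the CDF of the outcome induced by the regime `(π₁, π₂)`:
`∫∫ F_ε(y − m(h₂) − π₂(h₂) c(h₂)) κ((h₁, π₁(h₁)), dh₂) μ(dh₁)`. -/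
def prPi {X1 X2 : Type*} [MeasurableSpace X1] [MeasurableSpace X2]
    (μ : Measure X1) (κ : Kernel (X1 × ℝ) X2) (m c : X2 → ℝ) (Feps : ℝ → ℝ)
    (π₁ : X1 → ℝ) (π₂ : X2 → ℝ) (y : ℝ) : ℝ :=
  ∫ h₁, (∫ h₂, Feps (y - m h₂ - π₂ h₂ * c h₂) ∂(κ (h₁, π₁ h₁))) ∂μ

/-- `I(y, F, G) = ∫ F(y − u − |v|) dG(u,v)`. -/
def Ifun (y : ℝ) (F : ℝ → ℝ) (G : Measure (ℝ × ℝ)) : ℝ :=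
  ∫ p, F (y - p.1 - |p.2|) ∂G

/-- `G(·,· | h₁, a₁)`: the pushforward of `κ((h₁,a₁),·)` under `h₂ ↦ (m h₂, c h₂)`. -/
def Gdist {X1 X2 : Type*} [MeasurableSpace X1] [MeasurableSpace X2]
    (κ : Kernel (X1 × ℝ) X2) (m c : X2 → ℝ) (h₁ : X1) (a₁ : ℝ) : Measure (ℝ × ℝ) :=
  (κ (h₁, a₁)).map (fun h₂ => (m h₂, c h₂))

/-- `d(h₁, y) = I(y, F_ε, G(·,·|h₁,−1)) − I(y, F_ε, G(·,·|h₁,1))`. -/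
def dfun {X1 X2 : Type*} [MeasurableSpace X1] [MeasurableSpace X2]
    (κ : Kernel (X1 × ℝ) X2) (m c : X2 → ℝ) (Feps : ℝ → ℝ) (h₁ : X1) (y : ℝ) : ℝ :=
  Ifun y Feps (Gdist κ m c h₁ (-1)) - Ifun y Feps (Gdist κ m c h₁ 1)

/-- `Γ(h₁, y) = sgn(d(h₁, y))`. -/
def Gam {X1 X2 : Type*} [MeasurableSpace X1] [MeasurableSpace X2]
    (κ : Kernel (X1 × ℝ) X2) (m c : X2 → ℝ) (Feps : ℝ → ℝ) (h₁ : X1) (y : ℝ) : ℝ :=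
  sgn (dfun κ m c Feps h₁ y)

/-- `q^π(τ) = inf{y : pr^π(Y ≤ y) ≥ τ}`. -/
def quant {X1 X2 : Type*} [MeasurableSpace X1] [MeasurableSpace X2]
    (μ : Measure X1) (κ : Kernel (X1 × ℝ) X2) (m c : X2 → ℝ) (Feps : ℝ → ℝ)
    (τ : ℝ) (π₁ : X1 → ℝ) (π₂ : X2 → ℝ) : ℝ :=
  sInf {y : ℝ | τ ≤ prPi μ κ m c Feps π₁ π₂ y}

/-- `y*_τ = inf{y : pr^{(Γ(·,y), π₂*)}(Y ≤ y) ≥ τ}` where `π₂*(h₂) = sgn(c(h₂))`. -/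
def ystar {X1 X2 : Type*} [MeasurableSpace X1] [MeasurableSpace X2]
    (μ : Measure X1) (κ : Kernel (X1 × ℝ) X2) (m c : X2 → ℝ) (Feps : ℝ → ℝ)
    (τ : ℝ) : ℝ :=
  sInf {y : ℝ |
    τ ≤ prPi μ κ m c Feps (fun h₁ => Gam κ m c Feps h₁ y) (fun h₂ => sgn (c h₂)) y}

/-- `f(y) = q^{(Γ(·,y), π₂*)}(τ)`. -/
def fQIQ {X1 X2 : Type*} [MeasurableSpace X1] [MeasurableSpace X2]
    (μ : Measure X1) (κ : Kernel (X1 × ℝ) X2) (m c : X2 → ℝ) (Feps : ℝ → ℝ)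
    (τ : ℝ) (y : ℝ) : ℝ :=
  quant μ κ m c Feps τ (fun h₁ => Gam κ m c Feps h₁ y) (fun h₂ => sgn (c h₂))

structure IsCDF (F : ℝ → ℝ) : Prop where
  monotone : Monotone F
  continuousWithinAt_Ici : ∀ x, ContinuousWithinAt F (Ici x) x
  tendsto_atBot : Tendsto F atBot (nhds 0)
  tendsto_atTop : Tendsto F atTop (nhds 1)

namespace IsCDF

variable {F : ℝ → ℝ}

lemma mem_Icc (hF : IsCDF F) (x : ℝ) : F x ∈ Icc (0 : ℝ) 1 :=
  ⟨hF.monotone.le_of_tendsto hF.tendsto_atBot x, hF.monotone.ge_of_tendsto hF.tendsto_atTop x⟩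

lemma norm_le_one (hF : IsCDF F) (x : ℝ) : ‖F x‖ ≤ 1 := by
  rw [Real.norm_eq_abs, abs_le]
  exact ⟨by linarith [(hF.mem_Icc x).1], (hF.mem_Icc x).2⟩

lemma measurable (hF : IsCDF F) : Measurable F :=
  hF.monotone.measurable

lemma comp_sub_const (hF : IsCDF F) (t : ℝ) : IsCDF fun w => F (w - t) where
  monotone _ _ h := hF.monotone (sub_le_sub_right h t)
  continuousWithinAt_Ici x :=
    (hF.continuousWithinAt_Ici (x - t)).comp (f := fun w => w - t)
      (continuous_sub_right t).continuousWithinAt fun _ hw => sub_le_sub_right hw t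
  tendsto_atBot := by exact hF.tendsto_atBot.comp (tendsto_atBot_add_const_right _ (-t) tendsto_id)
  tendsto_atTop := by exact hF.tendsto_atTop.comp (tendsto_atTop_add_const_right _ (-t) tendsto_id)

lemma min {G : ℝ → ℝ} (hF : IsCDF F) (hG : IsCDF G) : IsCDF fun w => min (F w) (G w) where
  monotone := hF.monotone.min hG.monotone
  continuousWithinAt_Ici x := (hF.continuousWithinAt_Ici x).min (hG.continuousWithinAt_Ici x)
  tendsto_atBot := by simpa using hF.tendsto_atBot.min hG.tendsto_atBot
  tendsto_atTop := by simpa using hF.tendsto_atTop.min hG.tendsto_atTop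

lemma nonempty_setOf_le (hF : IsCDF F) {τ : ℝ} (hτ : τ < 1) : {w | τ ≤ F w}.Nonempty :=
  (hF.tendsto_atTop.eventually_const_le hτ).exists

lemma bddBelow_setOf_le (hF : IsCDF F) {τ : ℝ} (hτ : 0 < τ) : BddBelow {w | τ ≤ F w} := by
  obtain ⟨w₀, hw₀⟩ := eventually_atBot.mp (hF.tendsto_atBot.eventually_lt_const hτ)
  exact ⟨w₀, fun w hw => le_of_not_gt fun hlt => (hw₀ w hlt.le).not_ge hw⟩

lemma le_apply_sInf (hF : IsCDF F) {τ : ℝ} (hτ : τ ∈ Ioo (0 : ℝ) 1) :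
    τ ≤ F (sInf {w | τ ≤ F w}) := by
  have hne := hF.nonempty_setOf_le hτ.2
  have hbdd := hF.bddBelow_setOf_le hτ.1
  refine ge_of_tendsto ((hF.continuousWithinAt_Ici _).mono Ioi_subset_Ici_self)
    (eventually_mem_nhdsWithin.mono fun w hw => ?_)
  obtain ⟨z, hz, hzw⟩ := (csInf_lt_iff hbdd hne).mp hw
  exact hz.trans (hF.monotone hzw.le)

section Mixture

variable {α : Type*} [MeasurableSpace α] {ν : Measure α} {f : α → ℝ → ℝ}

lemma integrable_apply [IsFiniteMeasure ν] (hf : ∀ x, IsCDF (f x))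
    (hmeas : ∀ w, AEStronglyMeasurable (fun x => f x w) ν) (w : ℝ) :
    Integrable (fun x => f x w) ν :=
  (integrable_const 1).mono' (hmeas w) (ae_of_all _ fun x => (hf x).norm_le_one w)

lemma tendsto_integral [IsFiniteMeasure ν] (hf : ∀ x, IsCDF (f x))
    (hmeas : ∀ w, AEStronglyMeasurable (fun x => f x w) ν)
    {l : Filter ℝ} [l.IsCountablyGenerated] {φ : α → ℝ}
    (hlim : ∀ x, Tendsto (f x) l (nhds (φ x))) :
    Tendsto (fun w => ∫ x, f x w ∂ν) l (nhds (∫ x, φ x ∂ν)) :=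
  tendsto_integral_filter_of_dominated_convergence (fun _ => 1) (Eventually.of_forall hmeas)
    (Eventually.of_forall fun w => ae_of_all _ fun x => (hf x).norm_le_one w)
    (integrable_const 1) (ae_of_all _ hlim)

lemma integral [IsProbabilityMeasure ν] (hf : ∀ x, IsCDF (f x))
    (hmeas : ∀ w, AEStronglyMeasurable (fun x => f x w) ν) :
    IsCDF fun w => ∫ x, f x w ∂ν where
  monotone _ _ h := integral_mono (integrable_apply hf hmeas _) (integrable_apply hf hmeas _)
    fun x => (hf x).monotone h
  continuousWithinAt_Ici w :=
    tendsto_integral hf hmeas fun x => (hf x).continuousWithinAt_Ici w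
  tendsto_atBot := by
    simpa using tendsto_integral hf hmeas fun x => (hf x).tendsto_atBot
  tendsto_atTop := by
    simpa using tendsto_integral hf hmeas fun x => (hf x).tendsto_atTop

end Mixture

end IsCDF

lemma measurable_sgn : Measurable sgn :=
  Measurable.ite measurableSet_Ici measurable_const measurable_const

lemma sgn_eq_neg_one_or_one (x : ℝ) : sgn x = -1 ∨ sgn x = 1 := by
  unfold sgn; split_ifs <;> simp

lemma sgn_mul_self (x : ℝ) : sgn x * x = |x| := by
  unfold sgn; split_ifs with hx
  · rw [one_mul, abs_of_nonneg hx]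
  · rw [neg_one_mul, abs_of_neg (not_le.mp hx)]

lemma apply_sgn_sub_eq_min (φ : ℝ → ℝ) : φ (sgn (φ (-1) - φ 1)) = min (φ (-1)) (φ 1) := by
  unfold sgn; split_ifs with h
  · rw [min_eq_right (sub_nonneg.mp h)]
  · rw [min_eq_left (sub_neg.mp (not_le.mp h)).le]

lemma isCDF_Ifun {F : ℝ → ℝ} (hF : IsCDF F) (ν : Measure (ℝ × ℝ)) [IsProbabilityMeasure ν] :
    IsCDF fun w => Ifun w F ν := by
  have := IsCDF.integral (ν := ν) (fun p => hF.comp_sub_const (p.1 + |p.2|)) fun w =>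
    (hF.measurable.comp (measurable_const.sub (measurable_fst.add measurable_snd.abs)))
      |>.aestronglyMeasurable
  simpa only [Ifun, sub_sub] using this

section Model

variable {X1 X2 : Type*} [MeasurableSpace X1] [MeasurableSpace X2]
  (μ : Measure X1) (κ : Kernel (X1 × ℝ) X2) {m c : X2 → ℝ} {F : ℝ → ℝ}

lemma isProbabilityMeasure_Gdist [IsMarkovKernel κ] (hm : Measurable m) (hc : Measurable c)
    (h₁ : X1) (a : ℝ) : IsProbabilityMeasure (Gdist κ m c h₁ a) :=
  Measure.isProbabilityMeasure_map (hm.prodMk hc).aemeasurable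

lemma isCDF_Ifun_Gdist [IsMarkovKernel κ] (hm : Measurable m) (hc : Measurable c) (hF : IsCDF F)
    (h₁ : X1) (a : ℝ) : IsCDF fun w => Ifun w F (Gdist κ m c h₁ a) :=
  have := isProbabilityMeasure_Gdist κ hm hc h₁ a
  isCDF_Ifun hF _

lemma measurable_Ifun_Gdist (hm : Measurable m) (hc : Measurable c) (hF : Measurable F)
    {π₁ : X1 → ℝ} (hπ₁ : Measurable π₁) (w : ℝ) :
    Measurable fun h₁ => Ifun w F (Gdist κ m c h₁ (π₁ h₁)) := by
  have := (StronglyMeasurable.integral_kernel (κ := κ.map fun h₂ => (m h₂, c h₂))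
    (f := fun p : ℝ × ℝ => F (w - p.1 - |p.2|)) (hF.comp
      ((measurable_const.sub measurable_fst).sub measurable_snd.abs)).stronglyMeasurable)
  simp only [Kernel.map_apply _ (hm.prodMk hc)] at this
  exact this.measurable.comp (measurable_id.prodMk hπ₁)

lemma measurable_Gam (hm : Measurable m) (hc : Measurable c) (hF : Measurable F) (y : ℝ) :
    Measurable fun h₁ => Gam κ m c F h₁ y :=
  measurable_sgn.comp <| (measurable_Ifun_Gdist κ hm hc hF measurable_const y).sub
    (measurable_Ifun_Gdist κ hm hc hF measurable_const y)

lemma prPi_sgn_eq (hm : Measurable m) (hc : Measurable c) (hF : Measurable F)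
    (π₁ : X1 → ℝ) (w : ℝ) :
    prPi μ κ m c F π₁ (fun h₂ => sgn (c h₂)) w =
      ∫ h₁, Ifun w F (Gdist κ m c h₁ (π₁ h₁)) ∂μ := by
  have hmeas : Measurable fun p : ℝ × ℝ => F (w - p.1 - |p.2|) :=
    hF.comp ((measurable_const.sub measurable_fst).sub measurable_snd.abs)
  simp only [prPi, Ifun, Gdist, sgn_mul_self,
    integral_map (hm.prodMk hc).aemeasurable hmeas.aestronglyMeasurable]

lemma isCDF_prPi_sgn [IsProbabilityMeasure μ] [IsMarkovKernel κ] (hm : Measurable m)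
    (hc : Measurable c) (hF : IsCDF F) {π₁ : X1 → ℝ} (hπ₁ : Measurable π₁) :
    IsCDF (prPi μ κ m c F π₁ fun h₂ => sgn (c h₂)) := by
  rw [funext (prPi_sgn_eq μ κ hm hc hF.measurable π₁)]
  exact IsCDF.integral (fun h₁ => isCDF_Ifun_Gdist κ hm hc hF h₁ _) fun w =>
    (measurable_Ifun_Gdist κ hm hc hF.measurable hπ₁ w).aestronglyMeasurable

lemma prPi_Gam_self_eq (hm : Measurable m) (hc : Measurable c) (hF : Measurable F) (z : ℝ) :
    prPi μ κ m c F (fun h₁ => Gam κ m c F h₁ z) (fun h₂ => sgn (c h₂)) z =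
      ∫ h₁, min (Ifun z F (Gdist κ m c h₁ (-1))) (Ifun z F (Gdist κ m c h₁ 1)) ∂μ := by
  rw [prPi_sgn_eq μ κ hm hc hF]
  exact integral_congr_ae (ae_of_all _ fun h₁ =>
    apply_sgn_sub_eq_min fun a => Ifun z F (Gdist κ m c h₁ a))

lemma isCDF_min_Ifun_Gdist [IsMarkovKernel κ] (hm : Measurable m) (hc : Measurable c)
    (hF : IsCDF F) (h₁ : X1) :
    IsCDF fun w => min (Ifun w F (Gdist κ m c h₁ (-1))) (Ifun w F (Gdist κ m c h₁ 1)) :=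
  (isCDF_Ifun_Gdist κ hm hc hF h₁ _).min (isCDF_Ifun_Gdist κ hm hc hF h₁ _)

lemma measurable_min_Ifun_Gdist (hm : Measurable m) (hc : Measurable c) (hF : Measurable F)
    (w : ℝ) :
    Measurable fun h₁ => min (Ifun w F (Gdist κ m c h₁ (-1))) (Ifun w F (Gdist κ m c h₁ 1)) :=
  (measurable_Ifun_Gdist κ hm hc hF measurable_const w).min
    (measurable_Ifun_Gdist κ hm hc hF measurable_const w)

lemma isCDF_prPi_Gam_self [IsProbabilityMeasure μ] [IsMarkovKernel κ] (hm : Measurable m)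
    (hc : Measurable c) (hF : IsCDF F) :
    IsCDF fun z => prPi μ κ m c F (fun h₁ => Gam κ m c F h₁ z) (fun h₂ => sgn (c h₂)) z := by
  simp only [prPi_Gam_self_eq μ κ hm hc hF.measurable]
  exact IsCDF.integral (isCDF_min_Ifun_Gdist κ hm hc hF) fun w =>
    (measurable_min_Ifun_Gdist κ hm hc hF.measurable w).aestronglyMeasurable

lemma prPi_Gam_self_le [IsProbabilityMeasure μ] [IsMarkovKernel κ] (hm : Measurable m)
    (hc : Measurable c) (hF : IsCDF F) {π₁ : X1 → ℝ} (hπ₁ : Measurable π₁)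
    (hπ₁_val : ∀ h₁, π₁ h₁ = -1 ∨ π₁ h₁ = 1) (z : ℝ) :
    prPi μ κ m c F (fun h₁ => Gam κ m c F h₁ z) (fun h₂ => sgn (c h₂)) z ≤
      prPi μ κ m c F π₁ (fun h₂ => sgn (c h₂)) z := by
  rw [prPi_Gam_self_eq μ κ hm hc hF.measurable, prPi_sgn_eq μ κ hm hc hF.measurable]
  refine integral_mono
    (IsCDF.integrable_apply (isCDF_min_Ifun_Gdist κ hm hc hF)
      (fun w => (measurable_min_Ifun_Gdist κ hm hc hF.measurable w).aestronglyMeasurable) z)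
    (IsCDF.integrable_apply (fun h₁ => isCDF_Ifun_Gdist κ hm hc hF h₁ _)
      (fun w => (measurable_Ifun_Gdist κ hm hc hF.measurable hπ₁ w).aestronglyMeasurable) z)
    fun h₁ => ?_
  rcases hπ₁_val h₁ with h | h <;> simp only [h]
  exacts [min_le_left _ _, min_le_right _ _]

end Model

theorem stmt7_general
    {X1 X2 : Type*} [MeasurableSpace X1] [MeasurableSpace X2]
    (μ : Measure X1) [IsProbabilityMeasure μ]
    (κ : Kernel (X1 × ℝ) X2) [IsMarkovKernel κ]
    (m c : X2 → ℝ) (hm : Measurable m) (hc : Measurable c)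
    (Feps : ℝ → ℝ) (hF_mono : Monotone Feps)
    (hF_rc : ∀ x : ℝ, ContinuousWithinAt Feps (Ici x) x)
    (hF_bot : Tendsto Feps atBot (nhds 0)) (hF_top : Tendsto Feps atTop (nhds 1))
    (τ : ℝ) (hτ : τ ∈ Ioo (0:ℝ) 1) (y : ℝ) :
    τ ≤ prPi μ κ m c Feps (fun h₁ => Gam κ m c Feps h₁ y) (fun h₂ => sgn (c h₂))
          (fQIQ μ κ m c Feps τ y) ∧
    fQIQ μ κ m c Feps τ y ≤ ystar μ κ m c Feps τ := by
  have hF : IsCDF Feps := ⟨hF_mono, hF_rc, hF_bot, hF_top⟩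
  have hΓ_meas := measurable_Gam κ hm hc hF.measurable y
  have hP := isCDF_prPi_sgn μ κ hm hc hF hΓ_meas
  have hD := isCDF_prPi_Gam_self μ κ hm hc hF
  refine ⟨hP.le_apply_sInf hτ, csInf_le_csInf (hP.bddBelow_setOf_le hτ.1)
    (hD.nonempty_setOf_le hτ.2) fun z hz => le_trans (α := ℝ) hz ?_⟩
  exact prPi_Gam_self_le μ κ hm hc hF hΓ_meas (fun h₁ => sgn_eq_neg_one_or_one _) z

/-- fix `τ ∈ (0,1)`. For every `y ∈ ℝ`,
`pr^{(Γ(·,y), π₂*)}(Y ≤ f(y)) ≥ τ` and `f(y) ≤ y*_τ`. -/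
theorem stmt7
    {X1 X2 : Type*} [MeasurableSpace X1] [MeasurableSpace X2]
    [StandardBorelSpace X1] [StandardBorelSpace X2]
    (μ : Measure X1) [IsProbabilityMeasure μ]
    (κ : Kernel (X1 × ℝ) X2) [IsMarkovKernel κ]
    (m c : X2 → ℝ) (hm : Measurable m) (hc : Measurable c)
    (Feps : ℝ → ℝ) (hF_mono : Monotone Feps)
    (hF_rc : ∀ x : ℝ, ContinuousWithinAt Feps (Ici x) x)
    (hF_bot : Tendsto Feps atBot (nhds 0)) (hF_top : Tendsto Feps atTop (nhds 1))
    (hF_mem : ∀ x : ℝ, Feps x ∈ Icc (0:ℝ) 1)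
    (τ : ℝ) (hτ : τ ∈ Ioo (0:ℝ) 1) (y : ℝ) :
    τ ≤ prPi μ κ m c Feps (fun h₁ => Gam κ m c Feps h₁ y) (fun h₂ => sgn (c h₂))
          (fQIQ μ κ m c Feps τ y) ∧
    fQIQ μ κ m c Feps τ y ≤ ystar μ κ m c Feps τ :=
  stmt7_general μ κ m c hm hc Feps hF_mono hF_rc hF_bot hF_top τ hτ y
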